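/- arXiv:2505.20786 — 3 statements merged into one kernel-verified Lean document; each statement's English description precedes it below -/
import Mathlib

section
/- Let s₁, s₂ : ℝ → ℂ be continuous, let δ : ℝ × ℝ → ℂ be a function of (η,t) satisfying δ_t = i·δ_{ηη} + i·(δ_η)² + s₁(t), and let θ : ℝ × ℝ → ℂ be a function of (η,t) satisfying θ_t = −i·θ_{ηη} + 2i·δ_η·θ_η + s₁(t)·θ − s₂(t), all sufficiently smooth (δ and θ of class C³). Then β₄ := θ_η·e^{−δ} satisfies the conjugate heat equation with imaginary time β₄,t = −i·β₄,ηη. -/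
/-- Partial derivative in the first (space) variable of a function `ℝ × ℝ → ℂ`,
the variables being `(η, t)`. -/
noncomputable def pdEta (f : ℝ × ℝ → ℂ) (p : ℝ × ℝ) : ℂ :=
  deriv (fun s => f (s, p.2)) p.1

/-- Partial derivative in the second (time) variable of a function `ℝ × ℝ → ℂ`. -/
noncomputable def pdT (f : ℝ × ℝ → ℂ) (p : ℝ × ℝ) : ℂ :=
  deriv (fun s => f (p.1, s)) p.2

section helpers

variable {f g : ℝ × ℝ → ℂ} {p : ℝ × ℝ}

lemma hasDerivAt_sliceEta (hf : DifferentiableAt ℝ f p) :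
    HasDerivAt (fun s => f (s, p.2)) (fderiv ℝ f p ((1:ℝ), (0:ℝ))) p.1 := by
  have h1 : HasDerivAt (fun s : ℝ => (s, p.2)) ((1:ℝ), (0:ℝ)) p.1 :=
    HasDerivAt.prodMk (hasDerivAt_id _) (hasDerivAt_const _ _)
  have h2 : HasFDerivAt f (fderiv ℝ f p) ((p.1 : ℝ), (p.2 : ℝ)) := by
    simpa using hf.hasFDerivAt
  exact h2.comp_hasDerivAt p.1 h1

lemma hasDerivAt_sliceT (hf : DifferentiableAt ℝ f p) :
    HasDerivAt (fun s => f (p.1, s)) (fderiv ℝ f p ((0:ℝ), (1:ℝ))) p.2 := by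
  have h1 : HasDerivAt (fun s : ℝ => (p.1, s)) ((0:ℝ), (1:ℝ)) p.2 :=
    HasDerivAt.prodMk (hasDerivAt_const _ _) (hasDerivAt_id _)
  have h2 : HasFDerivAt f (fderiv ℝ f p) ((p.1 : ℝ), (p.2 : ℝ)) := by
    simpa using hf.hasFDerivAt
  exact h2.comp_hasDerivAt p.2 h1

lemma pdEta_eq_fderiv (hf : DifferentiableAt ℝ f p) :
    pdEta f p = fderiv ℝ f p ((1:ℝ), (0:ℝ)) := (hasDerivAt_sliceEta hf).deriv

lemma pdT_eq_fderiv (hf : DifferentiableAt ℝ f p) :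
    pdT f p = fderiv ℝ f p ((0:ℝ), (1:ℝ)) := (hasDerivAt_sliceT hf).deriv

lemma hasDerivAt_sliceEta' (hf : DifferentiableAt ℝ f p) :
    HasDerivAt (fun s => f (s, p.2)) (pdEta f p) p.1 := by
  rw [pdEta_eq_fderiv hf]; exact hasDerivAt_sliceEta hf

lemma hasDerivAt_sliceT' (hf : DifferentiableAt ℝ f p) :
    HasDerivAt (fun s => f (p.1, s)) (pdT f p) p.2 := by
  rw [pdT_eq_fderiv hf]; exact hasDerivAt_sliceT hf

lemma pdEta_contDiff {m n : WithTop ℕ∞} (hmn : m + 1 ≤ n) (hf : ContDiff ℝ n f) :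
    ContDiff ℝ m (pdEta f) := by
  have hd : Differentiable ℝ f := hf.differentiable (lt_of_lt_of_le (lt_of_lt_of_le zero_lt_one le_add_self) hmn).ne'
  have heq : pdEta f = fun q =>
      (ContinuousLinearMap.apply ℝ ℂ ((1:ℝ), (0:ℝ))) (fderiv ℝ f q) := by
    funext q
    exact pdEta_eq_fderiv (hd q)
  rw [heq]
  exact (ContinuousLinearMap.apply ℝ ℂ ((1:ℝ), (0:ℝ))).contDiff.comp (hf.fderiv_right hmn)

lemma pd_comm (hf : ContDiff ℝ 3 f) (p : ℝ × ℝ) :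
    pdT (pdEta f) p = pdEta (pdT f) p := by
  have hd : Differentiable ℝ f := hf.differentiable (by norm_num)
  have hF : ContDiff ℝ 2 (fderiv ℝ f) := hf.fderiv_right (by norm_num)
  have hdF : Differentiable ℝ (fderiv ℝ f) := hF.differentiable (by norm_num)
  have key := second_derivative_symmetric (f' := fderiv ℝ f) (f'' := fderiv ℝ (fderiv ℝ f) p)
    (fun y => (hd y).hasFDerivAt) ((hdF p).hasFDerivAt)
  have hEta : pdEta f = fun q =>
      (ContinuousLinearMap.apply ℝ ℂ ((1:ℝ), (0:ℝ))) (fderiv ℝ f q) := by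
    funext q; exact pdEta_eq_fderiv (hd q)
  have hT : pdT f = fun q =>
      (ContinuousLinearMap.apply ℝ ℂ ((0:ℝ), (1:ℝ))) (fderiv ℝ f q) := by
    funext q; exact pdT_eq_fderiv (hd q)
  have comp1 : ∀ v : ℝ × ℝ, HasFDerivAt
      (fun q => (ContinuousLinearMap.apply ℝ ℂ v) (fderiv ℝ f q))
      ((ContinuousLinearMap.apply ℝ ℂ v).comp (fderiv ℝ (fderiv ℝ f) p)) p := fun v =>
    (ContinuousLinearMap.apply ℝ ℂ v).hasFDerivAt.comp p (hdF p).hasFDerivAt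
  rw [hEta, hT, pdT_eq_fderiv ((comp1 _).differentiableAt),
    pdEta_eq_fderiv ((comp1 _).differentiableAt),
    (comp1 ((1:ℝ),(0:ℝ))).fderiv, (comp1 ((0:ℝ),(1:ℝ))).fderiv]
  exact key _ _

end helpers


/-- The substitution `β₄ = θ_η e^{−δ}` reduces the equation
for `θ` to the conjugate heat equation with imaginary time. -/
theorem cole_hopf_theta
    (s₁ s₂ : ℝ → ℂ) (hs₁ : Continuous s₁) (hs₂ : Continuous s₂)
    (δ : ℝ × ℝ → ℂ) (hδ : ContDiff ℝ 3 δ)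
    (hδeq : ∀ p, pdT δ p =
      Complex.I * pdEta (pdEta δ) p + Complex.I * (pdEta δ p) ^ 2 + s₁ p.2)
    (θ : ℝ × ℝ → ℂ) (hθ : ContDiff ℝ 3 θ)
    (hθeq : ∀ p, pdT θ p = -Complex.I * pdEta (pdEta θ) p
      + 2 * Complex.I * pdEta δ p * pdEta θ p + s₁ p.2 * θ p - s₂ p.2)
    (β₄ : ℝ × ℝ → ℂ)
    (hβ₄ : ∀ p, β₄ p = pdEta θ p * Complex.exp (-δ p)) :
    ∀ p, pdT β₄ p = -Complex.I * pdEta (pdEta β₄) p := by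
  have hdθ : Differentiable ℝ θ := hθ.differentiable (by norm_num)
  have hdδ : Differentiable ℝ δ := hδ.differentiable (by norm_num)
  have hθ1 : ContDiff ℝ 2 (pdEta θ) := pdEta_contDiff (by norm_num) hθ
  have hθ2 : ContDiff ℝ 1 (pdEta (pdEta θ)) := pdEta_contDiff (by norm_num) hθ1
  have hδ1 : ContDiff ℝ 2 (pdEta δ) := pdEta_contDiff (by norm_num) hδ
  have hδ2 : ContDiff ℝ 1 (pdEta (pdEta δ)) := pdEta_contDiff (by norm_num) hδ1
  have hdθ1 : Differentiable ℝ (pdEta θ) := hθ1.differentiable (by norm_num)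
  have hdθ2 : Differentiable ℝ (pdEta (pdEta θ)) := hθ2.differentiable (by norm_num)
  have hdδ1 : Differentiable ℝ (pdEta δ) := hδ1.differentiable (by norm_num)
  -- Step A: the η-derivative of β₄ everywhere
  have hβη : ∀ q, pdEta β₄ q = pdEta (pdEta θ) q * Complex.exp (-δ q)
      + pdEta θ q * (Complex.exp (-δ q) * -(pdEta δ q)) := by
    intro q
    have hE : HasDerivAt (fun s => Complex.exp (-δ (s, q.2)))
        (Complex.exp (-δ q) * -(pdEta δ q)) q.1 := by
      simpa using (hasDerivAt_sliceEta' (hdδ q)).neg.cexp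
    have hA : HasDerivAt (fun s => pdEta θ (s, q.2)) (pdEta (pdEta θ) q) q.1 :=
      hasDerivAt_sliceEta' (hdθ1 q)
    have hfun : (fun s => β₄ (s, q.2))
        = fun s => pdEta θ (s, q.2) * Complex.exp (-δ (s, q.2)) := by
      funext s; exact hβ₄ (s, q.2)
    have h0 : pdEta β₄ q = deriv (fun s => β₄ (s, q.2)) q.1 := rfl
    rw [hfun] at h0
    rw [h0]
    exact (hA.mul hE).deriv
  intro p
  -- time derivative of β₄ at p
  have hEt : HasDerivAt (fun s => Complex.exp (-δ (p.1, s)))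
      (Complex.exp (-δ p) * -(pdT δ p)) p.2 := by
    simpa using (hasDerivAt_sliceT' (hdδ p)).neg.cexp
  have hAt : HasDerivAt (fun s => pdEta θ (p.1, s)) (pdT (pdEta θ) p) p.2 :=
    hasDerivAt_sliceT' (hdθ1 p)
  have h1 : pdT β₄ p = pdT (pdEta θ) p * Complex.exp (-δ p)
      + pdEta θ p * (Complex.exp (-δ p) * -(pdT δ p)) := by
    have hfun : (fun s => β₄ (p.1, s))
        = fun s => pdEta θ (p.1, s) * Complex.exp (-δ (p.1, s)) := by
      funext s; exact hβ₄ (p.1, s)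
    have h0 : pdT β₄ p = deriv (fun s => β₄ (p.1, s)) p.2 := rfl
    rw [hfun] at h0
    rw [h0]
    exact (hAt.mul hEt).deriv
  -- slice derivatives in η at p
  have hA : HasDerivAt (fun s => pdEta θ (s, p.2)) (pdEta (pdEta θ) p) p.1 :=
    hasDerivAt_sliceEta' (hdθ1 p)
  have hA2 : HasDerivAt (fun s => pdEta (pdEta θ) (s, p.2))
      (pdEta (pdEta (pdEta θ)) p) p.1 := hasDerivAt_sliceEta' (hdθ2 p)
  have hB : HasDerivAt (fun s => pdEta δ (s, p.2)) (pdEta (pdEta δ) p) p.1 :=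
    hasDerivAt_sliceEta' (hdδ1 p)
  have hT : HasDerivAt (fun s => θ (s, p.2)) (pdEta θ p) p.1 :=
    hasDerivAt_sliceEta' (hdθ p)
  have hE : HasDerivAt (fun s => Complex.exp (-δ (s, p.2)))
      (Complex.exp (-δ p) * -(pdEta δ p)) p.1 := by
    simpa using (hasDerivAt_sliceEta' (hdδ p)).neg.cexp
  -- Step C: mixed partials commute
  have hC : pdT (pdEta θ) p = pdEta (pdT θ) p := pd_comm hθ p
  -- Step D: η-derivative of the θ equation
  have hD : pdEta (pdT θ) p
      = -Complex.I * pdEta (pdEta (pdEta θ)) p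
        + (2 * Complex.I * pdEta (pdEta δ) p * pdEta θ p
          + 2 * Complex.I * pdEta δ p * pdEta (pdEta θ) p)
        + s₁ p.2 * pdEta θ p := by
    have hfun : (fun s => pdT θ (s, p.2)) = fun s =>
        -Complex.I * pdEta (pdEta θ) (s, p.2)
        + 2 * Complex.I * pdEta δ (s, p.2) * pdEta θ (s, p.2)
        + s₁ p.2 * θ (s, p.2) - s₂ p.2 := by
      funext s; exact hθeq (s, p.2)
    have big := (((hA2.const_mul (-Complex.I)).add
        ((hB.const_mul (2 * Complex.I)).mul hA)).add
        (hT.const_mul (s₁ p.2))).sub_const (s₂ p.2)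
    have h0 : pdEta (pdT θ) p = deriv (fun s => pdT θ (s, p.2)) p.1 := rfl
    rw [hfun] at h0
    rw [h0]; exact big.deriv
  -- Step E: second η-derivative of β₄ at p
  have hEE : pdEta (pdEta β₄) p
      = (pdEta (pdEta (pdEta θ)) p * Complex.exp (-δ p)
          + pdEta (pdEta θ) p * (Complex.exp (-δ p) * -(pdEta δ p)))
        + (pdEta (pdEta θ) p * (Complex.exp (-δ p) * -(pdEta δ p))
          + pdEta θ p * ((Complex.exp (-δ p) * -(pdEta δ p)) * -(pdEta δ p)
            + Complex.exp (-δ p) * -(pdEta (pdEta δ) p))) := by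
    have hfun2 : (fun s => pdEta β₄ (s, p.2)) = fun s =>
        pdEta (pdEta θ) (s, p.2) * Complex.exp (-δ (s, p.2))
        + pdEta θ (s, p.2) * (Complex.exp (-δ (s, p.2)) * -(pdEta δ (s, p.2))) := by
      funext s; exact hβη (s, p.2)
    have big2 := (hA2.mul hE).add (hA.mul (hE.mul hB.neg))
    have h0 : pdEta (pdEta β₄) p = deriv (fun s => pdEta β₄ (s, p.2)) p.1 := rfl
    rw [hfun2] at h0
    rw [h0]; exact big2.deriv
  rw [h1, hC, hD, hEE, hδeq p]
  ring
end

section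
/- Let q_{2n−2}, q_{2n−1}, q_{2n} : ℝ × ℝ → ℂ be smooth functions of (x,y) satisfying the two-dimensional Toda lattice equation at the odd index: ∂²q_{2n−1}/∂x∂y = e^{q_{2n}−q_{2n−1}} − e^{q_{2n−1}−q_{2n−2}}. Let ψ, φ, φ⁻ : ℝ × ℝ → ℂ be smooth functions satisfying ∂ψ/∂x = −e^{−q_{2n−1}}·φ, ∂φ/∂y = e^{q_{2n}}·ψ, and ∂φ⁻/∂x = (∂q_{2n−2}/∂x)·φ⁻ − e^{q_{2n−1}}·ψ. Then the function H := ∂ψ/∂y + (∂q_{2n−1}/∂y)·ψ − e^{−q_{2n−2}}·φ⁻ satisfies ∂H/∂x = 0 identically. -/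
/-- Partial derivative in the first variable (x) of a function `ℝ × ℝ → ℂ`. -/
noncomputable def pdx (f : ℝ × ℝ → ℂ) (p : ℝ × ℝ) : ℂ :=
  deriv (fun s => f (s, p.2)) p.1

/-- Partial derivative in the second variable (y) of a function `ℝ × ℝ → ℂ`. -/
noncomputable def pdy (f : ℝ × ℝ → ℂ) (p : ℝ × ℝ) : ℂ :=
  deriv (fun s => f (p.1, s)) p.2


open Complex

lemma diffx {f : ℝ × ℝ → ℂ} (hf : ContDiff ℝ (⊤ : ℕ∞) f) (y : ℝ) :
    Differentiable ℝ (fun s : ℝ => f (s, y)) :=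
  (hf.comp (contDiff_id.prodMk contDiff_const)).differentiable (by simp)

lemma diffy {f : ℝ × ℝ → ℂ} (hf : ContDiff ℝ (⊤ : ℕ∞) f) (x : ℝ) :
    Differentiable ℝ (fun s : ℝ => f (x, s)) :=
  (hf.comp (contDiff_const.prodMk contDiff_id)).differentiable (by simp)

lemma pdx_fderiv {f : ℝ × ℝ → ℂ} (hf : ContDiff ℝ (⊤ : ℕ∞) f) (p : ℝ × ℝ) :
    pdx f p = fderiv ℝ f p ((1 : ℝ), (0 : ℝ)) := by
  have h1 : HasDerivAt (fun s : ℝ => (s, p.2)) ((1 : ℝ), (0 : ℝ)) p.1 :=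
    HasDerivAt.prodMk (hasDerivAt_id _) (hasDerivAt_const _ _)
  have h2 := ((hf.differentiable (by simp) (p.1, p.2)).hasFDerivAt.comp_hasDerivAt p.1 h1)
  simpa [pdx, Function.comp_def] using h2.deriv

lemma pdy_fderiv {f : ℝ × ℝ → ℂ} (hf : ContDiff ℝ (⊤ : ℕ∞) f) (p : ℝ × ℝ) :
    pdy f p = fderiv ℝ f p ((0 : ℝ), (1 : ℝ)) := by
  have h1 : HasDerivAt (fun s : ℝ => (p.1, s)) ((0 : ℝ), (1 : ℝ)) p.2 :=
    HasDerivAt.prodMk (hasDerivAt_const _ _) (hasDerivAt_id _)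
  have h2 := ((hf.differentiable (by simp) (p.1, p.2)).hasFDerivAt.comp_hasDerivAt p.2 h1)
  simpa [pdy, Function.comp_def] using h2.deriv

lemma contDiff_pdx {f : ℝ × ℝ → ℂ} (hf : ContDiff ℝ (⊤ : ℕ∞) f) :
    ContDiff ℝ (⊤ : ℕ∞) (pdx f) := by
  have : pdx f = fun p => fderiv ℝ f p ((1 : ℝ), (0 : ℝ)) := funext (pdx_fderiv hf)
  rw [this]
  exact (hf.fderiv_right (by exact_mod_cast le_top)).clm_apply contDiff_const

lemma contDiff_pdy {f : ℝ × ℝ → ℂ} (hf : ContDiff ℝ (⊤ : ℕ∞) f) :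
    ContDiff ℝ (⊤ : ℕ∞) (pdy f) := by
  have : pdy f = fun p => fderiv ℝ f p ((0 : ℝ), (1 : ℝ)) := funext (pdy_fderiv hf)
  rw [this]
  exact (hf.fderiv_right (by exact_mod_cast le_top)).clm_apply contDiff_const

lemma fderiv_apply_const {f : ℝ × ℝ → ℂ} (hf : ContDiff ℝ (⊤ : ℕ∞) f) (v p : ℝ × ℝ) :
    fderiv ℝ (fun q => fderiv ℝ f q v) p
      = (ContinuousLinearMap.apply ℝ ℂ v).comp (fderiv ℝ (fderiv ℝ f) p) := by
  have hfd : ContDiff ℝ (⊤ : ℕ∞) (fderiv ℝ f) := hf.fderiv_right (by exact_mod_cast le_top)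
  exact ((ContinuousLinearMap.apply ℝ ℂ v).hasFDerivAt.comp p
    (hfd.differentiable (by simp) p).hasFDerivAt).fderiv

lemma pdx_pdy_comm {f : ℝ × ℝ → ℂ} (hf : ContDiff ℝ (⊤ : ℕ∞) f) (p : ℝ × ℝ) :
    pdx (pdy f) p = pdy (pdx f) p := by
  have hfd : ContDiff ℝ (⊤ : ℕ∞) (fderiv ℝ f) := hf.fderiv_right (by exact_mod_cast le_top)
  have hy : pdy f = fun q => fderiv ℝ f q ((0 : ℝ), (1 : ℝ)) := funext (pdy_fderiv hf)
  have hx : pdx f = fun q => fderiv ℝ f q ((1 : ℝ), (0 : ℝ)) := funext (pdx_fderiv hf)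
  rw [hy, hx, pdx_fderiv (hfd.clm_apply contDiff_const),
    pdy_fderiv (hfd.clm_apply contDiff_const),
    fderiv_apply_const hf, fderiv_apply_const hf]
  exact (hf.contDiffAt.isSymmSndFDerivAt (by simp [minSmoothness_of_isRCLikeNormedField]; exact WithTop.coe_le_coe.mpr (le_top : (2 : ℕ∞) ≤ ⊤))) _ _

lemma pdx_add {f g : ℝ × ℝ → ℂ} (hf : ContDiff ℝ (⊤ : ℕ∞) f) (hg : ContDiff ℝ (⊤ : ℕ∞) g)
    (p : ℝ × ℝ) : pdx (fun q => f q + g q) p = pdx f p + pdx g p := by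
  simp only [pdx]
  exact deriv_add (diffx hf p.2 p.1) (diffx hg p.2 p.1)

lemma pdx_sub {f g : ℝ × ℝ → ℂ} (hf : ContDiff ℝ (⊤ : ℕ∞) f) (hg : ContDiff ℝ (⊤ : ℕ∞) g)
    (p : ℝ × ℝ) : pdx (fun q => f q - g q) p = pdx f p - pdx g p := by
  simp only [pdx]
  exact deriv_sub (diffx hf p.2 p.1) (diffx hg p.2 p.1)

lemma pdx_mul {f g : ℝ × ℝ → ℂ} (hf : ContDiff ℝ (⊤ : ℕ∞) f) (hg : ContDiff ℝ (⊤ : ℕ∞) g)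
    (p : ℝ × ℝ) : pdx (fun q => f q * g q) p = pdx f p * g p + f p * pdx g p := by
  simp only [pdx]
  exact deriv_mul (diffx hf p.2 p.1) (diffx hg p.2 p.1)

lemma pdx_neg (f : ℝ × ℝ → ℂ) (p : ℝ × ℝ) : pdx (fun q => -f q) p = -pdx f p := by
  simp only [pdx]
  exact deriv.neg

lemma pdx_exp {f : ℝ × ℝ → ℂ} (hf : ContDiff ℝ (⊤ : ℕ∞) f) (p : ℝ × ℝ) :
    pdx (fun q => Complex.exp (f q)) p = Complex.exp (f p) * pdx f p := by
  simp only [pdx]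
  exact deriv_cexp (diffx hf p.2 p.1)

lemma pdy_add {f g : ℝ × ℝ → ℂ} (hf : ContDiff ℝ (⊤ : ℕ∞) f) (hg : ContDiff ℝ (⊤ : ℕ∞) g)
    (p : ℝ × ℝ) : pdy (fun q => f q + g q) p = pdy f p + pdy g p := by
  simp only [pdy]
  exact deriv_add (diffy hf p.1 p.2) (diffy hg p.1 p.2)

lemma pdy_mul {f g : ℝ × ℝ → ℂ} (hf : ContDiff ℝ (⊤ : ℕ∞) f) (hg : ContDiff ℝ (⊤ : ℕ∞) g)
    (p : ℝ × ℝ) : pdy (fun q => f q * g q) p = pdy f p * g p + f p * pdy g p := by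
  simp only [pdy]
  exact deriv_mul (diffy hf p.1 p.2) (diffy hg p.1 p.2)

lemma pdy_neg (f : ℝ × ℝ → ℂ) (p : ℝ × ℝ) : pdy (fun q => -f q) p = -pdy f p := by
  simp only [pdy]
  exact deriv.neg

lemma pdy_exp {f : ℝ × ℝ → ℂ} (hf : ContDiff ℝ (⊤ : ℕ∞) f) (p : ℝ × ℝ) :
    pdy (fun q => Complex.exp (f q)) p = Complex.exp (f p) * pdy f p := by
  simp only [pdy]
  exact deriv_cexp (diffy hf p.1 p.2)

/-- Compatibility of the combined non-autonomous Lax pair of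
the 2D Toda lattice at the odd index. -/
theorem combined_lax_odd_compatibility
    (q2nm2 q2nm1 q2n : ℝ × ℝ → ℂ)
    (hq2nm2 : ContDiff ℝ (⊤ : ℕ∞) q2nm2)
    (hq2nm1 : ContDiff ℝ (⊤ : ℕ∞) q2nm1)
    (hq2n : ContDiff ℝ (⊤ : ℕ∞) q2n)
    (hToda : ∀ p, pdx (pdy q2nm1) p =
      Complex.exp (q2n p - q2nm1 p) - Complex.exp (q2nm1 p - q2nm2 p))
    (ψ φ φm : ℝ × ℝ → ℂ)
    (hψs : ContDiff ℝ (⊤ : ℕ∞) ψ) (hφs : ContDiff ℝ (⊤ : ℕ∞) φ)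
    (hφms : ContDiff ℝ (⊤ : ℕ∞) φm)
    (hψx : ∀ p, pdx ψ p = -Complex.exp (-q2nm1 p) * φ p)
    (hφy : ∀ p, pdy φ p = Complex.exp (q2n p) * ψ p)
    (hφmx : ∀ p, pdx φm p = pdx q2nm2 p * φm p - Complex.exp (q2nm1 p) * ψ p)
    (H : ℝ × ℝ → ℂ)
    (hH : ∀ p, H p = pdy ψ p + pdy q2nm1 p * ψ p - Complex.exp (-q2nm2 p) * φm p) :
    ∀ p, pdx H p = 0 := by
  intro p
  have hHf : H = fun q => pdy ψ q + pdy q2nm1 q * ψ q - Complex.exp (-q2nm2 q) * φm q :=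
    funext hH
  have hpψ := contDiff_pdy hψs
  have hpq := contDiff_pdy hq2nm1
  have hE2 : ContDiff ℝ (⊤ : ℕ∞) (fun q => Complex.exp (-q2nm2 q)) := hq2nm2.neg.cexp
  have hpxψ : pdx ψ = fun q => -Complex.exp (-q2nm1 q) * φ q := funext hψx
  rw [hHf, pdx_sub (hpψ.add (hpq.mul hψs)) (hE2.mul hφms),
    pdx_add hpψ (hpq.mul hψs), pdx_mul hpq hψs, pdx_mul hE2 hφms,
    pdx_exp hq2nm2.neg, pdx_neg, pdx_pdy_comm hψs, hpxψ,
    pdy_mul hq2nm1.neg.cexp.neg hφs, pdy_neg, pdy_exp hq2nm1.neg, pdy_neg,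
    hToda, hφy, hφmx]
  simp only [Complex.exp_sub, Complex.exp_neg]
  field_simp
  ring
end

section
/- Let q_{2n−1}, q_{2n}, q_{2n+1} : ℝ × ℝ → ℂ be smooth functions of (x,y) satisfying the two-dimensional Toda lattice equation at the even index: ∂²q_{2n}/∂x∂y = e^{q_{2n+1}−q_{2n}} − e^{q_{2n}−q_{2n−1}}. Let ψ, φ, ψ⁺ : ℝ × ℝ → ℂ be smooth functions satisfying ∂ψ/∂x = −e^{−q_{2n−1}}·φ, ∂φ/∂y = e^{q_{2n}}·ψ, and ∂ψ⁺/∂y = −(∂q_{2n+1}/∂y)·ψ⁺ + e^{−q_{2n}}·φ. Then the function K := ∂φ/∂x − (∂q_{2n}/∂x)·φ + e^{q_{2n+1}}·ψ⁺ satisfies ∂K/∂y = 0 identically. -/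
namespace LaxAux

lemma hasDerivAt_sliceX (f : ℝ × ℝ → ℂ) (hf : ContDiff ℝ (⊤ : ℕ∞) f) (x y : ℝ) :
    HasDerivAt (fun s => f (s, y)) (fderiv ℝ f (x, y) (1, 0)) x := by
  have h1 : HasDerivAt (fun s : ℝ => (s, y)) ((1 : ℝ), (0 : ℝ)) x :=
    (hasDerivAt_id x).prodMk (hasDerivAt_const x y)
  exact ((hf.differentiable (by simp) (x, y)).hasFDerivAt).comp_hasDerivAt x h1

lemma hasDerivAt_sliceY (f : ℝ × ℝ → ℂ) (hf : ContDiff ℝ (⊤ : ℕ∞) f) (x y : ℝ) :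
    HasDerivAt (fun s => f (x, s)) (fderiv ℝ f (x, y) (0, 1)) y := by
  have h1 : HasDerivAt (fun s : ℝ => (x, s)) ((0 : ℝ), (1 : ℝ)) y :=
    (hasDerivAt_const y x).prodMk (hasDerivAt_id y)
  exact ((hf.differentiable (by simp) (x, y)).hasFDerivAt).comp_hasDerivAt y h1

lemma pdx_eq (f : ℝ × ℝ → ℂ) (hf : ContDiff ℝ (⊤ : ℕ∞) f) (p : ℝ × ℝ) :
    pdx f p = fderiv ℝ f p (1, 0) := by
  have := hasDerivAt_sliceX f hf p.1 p.2
  simpa [pdx] using this.deriv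

lemma pdy_eq (f : ℝ × ℝ → ℂ) (hf : ContDiff ℝ (⊤ : ℕ∞) f) (p : ℝ × ℝ) :
    pdy f p = fderiv ℝ f p (0, 1) := by
  have := hasDerivAt_sliceY f hf p.1 p.2
  simpa [pdy] using this.deriv

lemma fderiv_smooth (f : ℝ × ℝ → ℂ) (hf : ContDiff ℝ (⊤ : ℕ∞) f) :
    ContDiff ℝ (⊤ : ℕ∞) (fderiv ℝ f) := by
  exact hf.fderiv_right (by exact_mod_cast le_refl _)

lemma pdx_smooth (f : ℝ × ℝ → ℂ) (hf : ContDiff ℝ (⊤ : ℕ∞) f) :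
    ContDiff ℝ (⊤ : ℕ∞) (pdx f) := by
  have : pdx f = fun p => fderiv ℝ f p (1, 0) := funext (pdx_eq f hf)
  rw [this]
  exact (fderiv_smooth f hf).clm_apply contDiff_const

lemma pdy_smooth (f : ℝ × ℝ → ℂ) (hf : ContDiff ℝ (⊤ : ℕ∞) f) :
    ContDiff ℝ (⊤ : ℕ∞) (pdy f) := by
  have : pdy f = fun p => fderiv ℝ f p (0, 1) := funext (pdy_eq f hf)
  rw [this]
  exact (fderiv_smooth f hf).clm_apply contDiff_const

/-- second-derivative slice lemma: `pdy` of the function `p ↦ fderiv f p v`. -/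
lemma second_slice (f : ℝ × ℝ → ℂ) (hf : ContDiff ℝ (⊤ : ℕ∞) f) (v : ℝ × ℝ) (x y : ℝ) :
    HasDerivAt (fun s => fderiv ℝ f (x, s) v)
      (fderiv ℝ (fderiv ℝ f) (x, y) (0, 1) v) y := by
  have h1 : HasDerivAt (fun s : ℝ => (x, s)) ((0 : ℝ), (1 : ℝ)) y :=
    (hasDerivAt_const y x).prodMk (hasDerivAt_id y)
  have h2 : HasDerivAt (fun s => fderiv ℝ f (x, s))
      (fderiv ℝ (fderiv ℝ f) (x, y) (0, 1)) y :=
    (((fderiv_smooth f hf).differentiable (by simp) (x, y)).hasFDerivAt).comp_hasDerivAt y h1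
  simpa using h2.clm_apply (hasDerivAt_const y v)

lemma second_slice_x (f : ℝ × ℝ → ℂ) (hf : ContDiff ℝ (⊤ : ℕ∞) f) (v : ℝ × ℝ) (x y : ℝ) :
    HasDerivAt (fun s => fderiv ℝ f (s, y) v)
      (fderiv ℝ (fderiv ℝ f) (x, y) (1, 0) v) x := by
  have h1 : HasDerivAt (fun s : ℝ => (s, y)) ((1 : ℝ), (0 : ℝ)) x :=
    (hasDerivAt_id x).prodMk (hasDerivAt_const x y)
  have h2 : HasDerivAt (fun s => fderiv ℝ f (s, y))
      (fderiv ℝ (fderiv ℝ f) (x, y) (1, 0)) x :=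
    (((fderiv_smooth f hf).differentiable (by simp) (x, y)).hasFDerivAt).comp_hasDerivAt x h1
  simpa using h2.clm_apply (hasDerivAt_const x v)

/-- Clairaut for smooth functions in terms of pdx/pdy. -/
lemma clairaut (f : ℝ × ℝ → ℂ) (hf : ContDiff ℝ (⊤ : ℕ∞) f) (p : ℝ × ℝ) :
    pdy (pdx f) p = pdx (pdy f) p := by
  have hx : pdx f = fun q => fderiv ℝ f q (1, 0) := funext (pdx_eq f hf)
  have hy : pdy f = fun q => fderiv ℝ f q (0, 1) := funext (pdy_eq f hf)
  have h1 : pdy (pdx f) p = fderiv ℝ (fderiv ℝ f) p (0, 1) (1, 0) := by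
    rw [hx, pdy]
    exact (second_slice f hf (1, 0) p.1 p.2).deriv
  have h2 : pdx (pdy f) p = fderiv ℝ (fderiv ℝ f) p (1, 0) (0, 1) := by
    rw [hy, pdx]
    exact (second_slice_x f hf (0, 1) p.1 p.2).deriv
  rw [h1, h2]
  exact second_derivative_symmetric
    (fun q => (hf.differentiable (by simp) q).hasFDerivAt)
    (((fderiv_smooth f hf).differentiable (by simp) p).hasFDerivAt) _ _

lemma hasDerivAt_pdy_slice (f : ℝ × ℝ → ℂ) (hf : ContDiff ℝ (⊤ : ℕ∞) f) (x y : ℝ) :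
    HasDerivAt (fun s => f (x, s)) (pdy f (x, y)) y := by
  have := hasDerivAt_sliceY f hf x y
  rwa [← pdy_eq f hf (x, y)] at this

lemma hasDerivAt_pdx_slice (f : ℝ × ℝ → ℂ) (hf : ContDiff ℝ (⊤ : ℕ∞) f) (x y : ℝ) :
    HasDerivAt (fun s => f (s, y)) (pdx f (x, y)) x := by
  have := hasDerivAt_sliceX f hf x y
  rwa [← pdx_eq f hf (x, y)] at this

end LaxAux

open LaxAux in
/-- Compatibility of the combined non-autonomous Lax pair of
the 2D Toda lattice at the even index. -/
theorem combined_lax_even_compatibility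
    (q2nm1 q2n q2np1 : ℝ × ℝ → ℂ)
    (hq2nm1 : ContDiff ℝ (⊤ : ℕ∞) q2nm1)
    (hq2n : ContDiff ℝ (⊤ : ℕ∞) q2n)
    (hq2np1 : ContDiff ℝ (⊤ : ℕ∞) q2np1)
    (hToda : ∀ p, pdx (pdy q2n) p =
      Complex.exp (q2np1 p - q2n p) - Complex.exp (q2n p - q2nm1 p))
    (ψ φ ψp : ℝ × ℝ → ℂ)
    (hψs : ContDiff ℝ (⊤ : ℕ∞) ψ) (hφs : ContDiff ℝ (⊤ : ℕ∞) φ)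
    (hψps : ContDiff ℝ (⊤ : ℕ∞) ψp)
    (hψx : ∀ p, pdx ψ p = -Complex.exp (-q2nm1 p) * φ p)
    (hφy : ∀ p, pdy φ p = Complex.exp (q2n p) * ψ p)
    (hψpy : ∀ p, pdy ψp p = -(pdy q2np1 p) * ψp p + Complex.exp (-q2n p) * φ p)
    (K : ℝ × ℝ → ℂ)
    (hK : ∀ p, K p = pdx φ p - pdx q2n p * φ p + Complex.exp (q2np1 p) * ψp p) :
    ∀ p, pdy K p = 0 := by
  intro p
  obtain ⟨x, y⟩ := p
  -- mixed partial of φ : pdy (pdx φ) = pdx (pdy φ) = pdx (e^{q2n} ψ)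
  have hmixφ : pdy (pdx φ) (x, y) =
      pdx q2n (x, y) * Complex.exp (q2n (x, y)) * ψ (x, y) +
        Complex.exp (q2n (x, y)) * (-Complex.exp (-q2nm1 (x, y)) * φ (x, y)) := by
    rw [clairaut φ hφs]
    have heq : pdy φ = fun q => Complex.exp (q2n q) * ψ q := funext hφy
    rw [heq, pdx]
    have h : HasDerivAt (fun s => Complex.exp (q2n (s, y)) * ψ (s, y))
        (Complex.exp (q2n (x, y)) * pdx q2n (x, y) * ψ (x, y) +
          Complex.exp (q2n (x, y)) * pdx ψ (x, y)) x :=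
      ((hasDerivAt_pdx_slice q2n hq2n x y).cexp).mul (hasDerivAt_pdx_slice ψ hψs x y)
    rw [h.deriv, hψx (x, y)]
    ring
  -- mixed partial of q2n : pdy (pdx q2n) = pdx (pdy q2n) = Toda rhs
  have hmixq : pdy (pdx q2n) (x, y) =
      Complex.exp (q2np1 (x, y) - q2n (x, y)) - Complex.exp (q2n (x, y) - q2nm1 (x, y)) := by
    rw [clairaut q2n hq2n]; exact hToda (x, y)
  -- now compute pdy K
  have hKeq : (fun s => K (x, s)) = fun s =>
      pdx φ (x, s) - pdx q2n (x, s) * φ (x, s) +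
        Complex.exp (q2np1 (x, s)) * ψp (x, s) := funext fun s => hK (x, s)
  have hD : HasDerivAt (fun s => K (x, s))
      (pdy (pdx φ) (x, y) -
        (pdy (pdx q2n) (x, y) * φ (x, y) + pdx q2n (x, y) * pdy φ (x, y)) +
        (Complex.exp (q2np1 (x, y)) * pdy q2np1 (x, y) * ψp (x, y) +
          Complex.exp (q2np1 (x, y)) * pdy ψp (x, y))) y := by
    rw [hKeq]
    exact ((hasDerivAt_pdy_slice (pdx φ) (pdx_smooth φ hφs) x y).sub
        ((hasDerivAt_pdy_slice (pdx q2n) (pdx_smooth q2n hq2n) x y).mul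
          (hasDerivAt_pdy_slice φ hφs x y))).add
      (((hasDerivAt_pdy_slice q2np1 hq2np1 x y).cexp).mul
        (hasDerivAt_pdy_slice ψp hψps x y))
  have hKy : pdy K (x, y) = _ := hD.deriv
  rw [pdy] at hKy
  rw [pdy, hKy, hmixφ, hmixq, hφy (x, y), hψpy (x, y)]
  simp only [Complex.exp_sub, Complex.exp_neg]
  have h1 : Complex.exp (q2n (x, y)) ≠ 0 := Complex.exp_ne_zero _
  have h2 : Complex.exp (q2nm1 (x, y)) ≠ 0 := Complex.exp_ne_zero _
  field_simp
  ring
end
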